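/- arXiv:math/0508215 — 2 statements merged into one kernel-verified Lean document; each statement's English description precedes it below -/
import Mathlib

section
/- If ξ and χ are bijections of the positive naturals with ξ ≠ χ, then the conjugated operations (+)_ξ and (+)_χ are distinct, where (+)_ω(a,b) = ω(ω⁻¹(a) + ω⁻¹(b)). Hence the map ω ↦ (+)_ω from bijections of ℕ to binary operations on ℕ is injective. -/
/-- The conjugate of addition by a bijection `ω` of the positive naturals. -/
def plusConj (ω : ℕ+ ≃ ℕ+) : ℕ+ → ℕ+ → ℕ+ :=
  fun a b => ω (ω.symm a + ω.symm b)

lemma plusConj_apply (ω : ℕ+ ≃ ℕ+) (x y : ℕ+) :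
    plusConj ω (ω x) (ω y) = ω (x + y) := by
  simp [plusConj]

lemma plusConj_inj : Function.Injective plusConj := by
  intro ξ χ h
  have hone : ξ 1 = χ 1 := by
    by_contra hne
    set m := ξ.symm (χ 1) with hm
    have hm1 : m ≠ 1 := by
      intro h1
      apply hne
      have := congrArg ξ h1
      simpa [hm] using this.symm
    obtain ⟨k, hk⟩ := PNat.exists_eq_succ_of_ne_one hm1
    have h1 : χ 1 = ξ (k + 1) := by rw [← hk, hm]; simp
    have h2 : plusConj ξ (ξ k) (ξ 1) = χ 1 := by
      rw [plusConj_apply]; exact h1.symm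
    rw [h] at h2
    have h3 : χ.symm (ξ k) + χ.symm (ξ 1) = 1 := by
      have := congrArg χ.symm h2
      simpa [plusConj] using this
    have ha := (χ.symm (ξ k)).one_le
    have hb := (χ.symm (ξ 1)).one_le
    have := congrArg (PNat.val) h3
    push_cast at this
    have ha' : 1 ≤ ((χ.symm (ξ k) : ℕ+) : ℕ) := ha
    have hb' : 1 ≤ ((χ.symm (ξ 1) : ℕ+) : ℕ) := hb
    omega
  have hall : ∀ n : ℕ+, ξ n = χ n := by
    intro n
    induction n using PNat.recOn with
    | one => exact hone
    | succ m ih =>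
      have h2 : plusConj ξ (ξ m) (ξ 1) = ξ (m + 1) := plusConj_apply ξ m 1
      rw [h, ih, hone, plusConj_apply] at h2
      exact h2.symm
  exact Equiv.ext hall

/-- Distinct bijections yield distinct conjugates of addition; hence
`ω ↦ (+)_ω` is injective. -/
theorem stmt_8 :
    (∀ ξ χ : ℕ+ ≃ ℕ+, ξ ≠ χ → plusConj ξ ≠ plusConj χ) ∧
    Function.Injective plusConj := by
  refine ⟨fun ξ χ hne h => hne (plusConj_inj h), plusConj_inj⟩
end

section
/- For fixed α, β, γ ∈ ℕ ∪ {0}, the binary operation f(a,b) = αa + βb + γab on the positive naturals is associative if and only if α² = α, β² = β, and αγ = βγ. -/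
/-!
Over `ℤ` the associator of `f a b = α a + β b + γ a b` is
`f (f a b) c - f a (f b c) = (α² - α) a - (β² - β) c + (α - β) γ a c`,
independent of `b`. An expression `p a + q c + r a c` vanishes at all positive `a, c` only if
`p = q = r = 0`, as the points `(1,1)`, `(2,1)`, `(1,2)` already show.
-/

section

variable {R : Type*} [CommRing R]

def affineBilin (α β γ a b : R) : R := α * a + β * b + γ * a * b

theorem affineBilin_assoc_sub (α β γ a b c : R) :
    affineBilin α β γ (affineBilin α β γ a b) c - affineBilin α β γ a (affineBilin α β γ b c) =
      (α ^ 2 - α) * a + -(β ^ 2 - β) * c + (α - β) * γ * (a * c) := by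
  unfold affineBilin
  ring

end

theorem forall_pos_mul_add_mul_add_mul_eq_zero_iff (p q r : ℤ) :
    (∀ a c : ℕ, 0 < a → 0 < c → p * a + q * c + r * (a * c) = 0) ↔ p = 0 ∧ q = 0 ∧ r = 0 := by
  constructor
  · intro h
    have h11 := h 1 1 one_pos one_pos
    have h21 := h 2 1 two_pos one_pos
    have h12 := h 1 2 one_pos two_pos
    push_cast at h11 h21 h12
    refine ⟨by linarith, by linarith, by linarith⟩
  · rintro ⟨rfl, rfl, rfl⟩ a c - -
    ring

/-- `f (a, b) = α a + β b + γ a b` is associative on positive naturals iff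
`α² = α`, `β² = β` and `α γ = β γ`. -/
theorem stmt_13 (α β γ : ℕ) (f : ℕ → ℕ → ℕ)
    (hf : ∀ a b : ℕ, f a b = α * a + β * b + γ * a * b) :
    (∀ a b c : ℕ, 0 < a → 0 < b → 0 < c → f (f a b) c = f a (f b c)) ↔
      (α ^ 2 = α ∧ β ^ 2 = β ∧ α * γ = β * γ) := by
  have hcast : ∀ a b : ℕ, (f a b : ℤ) = affineBilin (α : ℤ) β γ a b := fun a b => by
    simp [hf, affineBilin]
  have hassoc : ∀ a b c : ℕ, f (f a b) c = f a (f b c) ↔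
      ((α : ℤ) ^ 2 - α) * a + -((β : ℤ) ^ 2 - β) * c + ((α : ℤ) - β) * γ * (a * c) = 0 := by
    intro a b c
    rw [← affineBilin_assoc_sub, sub_eq_zero, ← Nat.cast_inj (R := ℤ), hcast, hcast, hcast, hcast]
  have hdrop_b : (∀ a b c : ℕ, 0 < a → 0 < b → 0 < c → f (f a b) c = f a (f b c)) ↔
      ∀ a c : ℕ, 0 < a → 0 < c → ((α : ℤ) ^ 2 - α) * a + -((β : ℤ) ^ 2 - β) * c +
        ((α : ℤ) - β) * γ * (a * c) = 0 :=
    ⟨fun h a c ha hc => (hassoc a 1 c).1 (h a 1 c ha one_pos hc),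
      fun h a b c ha _ hc => (hassoc a b c).2 (h a c ha hc)⟩
  rw [hdrop_b, forall_pos_mul_add_mul_add_mul_eq_zero_iff, neg_eq_zero, sub_mul, sub_eq_zero,
    sub_eq_zero, sub_eq_zero]
  norm_cast
end
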